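/- arXiv:2309.04332 — 5 statements merged into one kernel-verified Lean document; each statement's English description precedes it below -/
import Mathlib

section
/- Let w₁, w₂ ∈ ℝᵈ be an optimal solution of the problem: minimize ‖w₁‖² + ‖w₂‖² subject to yⱼ·((w₁ + r·w₂) · vⱼ) ≥ 1 for all j in a finite index set, where r > 0, vⱼ ∈ ℝᵈ, yⱼ ∈ {-1,1}, and the constraints are feasible. Then w₂ = r·w₁. -/
open Matrix BigOperators Finset

/-!
The constraints only see `s = w₁ + r • w₂`, so an optimum must have the least value of
`‖w₁‖² + ‖w₂‖²` among all pairs with that combination. By the Lagrange-type identity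
`(1 + r²)(‖a‖² + ‖b‖²) = ‖a + r b‖² + ‖b - r a‖²` that least value is `‖s‖² / (1 + r²)`,
attained exactly when `b = r a` (at `a = s / (1 + r²)`, `b = r s / (1 + r²)`).
-/

section DotProduct

variable {n R : Type*} [Fintype n]

theorem dotProduct_add_smul_self_add_dotProduct_sub_smul_self [CommRing R]
    (r : R) (a b : n → R) :
    (a + r • b) ⬝ᵥ (a + r • b) + (b - r • a) ⬝ᵥ (b - r • a) =
      (1 + r ^ 2) * (a ⬝ᵥ a + b ⬝ᵥ b) := by
  simp only [add_dotProduct, dotProduct_add, sub_dotProduct, dotProduct_sub,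
    smul_dotProduct, dotProduct_smul, smul_eq_mul, dotProduct_comm b a]
  ring

theorem eq_smul_of_forall_add_smul_eq [Field R] [LinearOrder R] [IsStrictOrderedRing R]
    {r : R} {w₁ w₂ : n → R}
    (hmin : ∀ u₁ u₂ : n → R, u₁ + r • u₂ = w₁ + r • w₂ →
      w₁ ⬝ᵥ w₁ + w₂ ⬝ᵥ w₂ ≤ u₁ ⬝ᵥ u₁ + u₂ ⬝ᵥ u₂) :
    w₂ = r • w₁ := by
  set s := w₁ + r • w₂
  have hc : (0 : R) < 1 + r ^ 2 := by positivity
  set u₁ := (1 + r ^ 2)⁻¹ • s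
  set u₂ := r • u₁
  have hsum : u₁ + r • u₂ = s := by
    simp only [u₂, u₁, smul_smul, ← add_smul]
    rw [← mul_assoc, ← sq, ← one_add_mul, mul_inv_cancel₀ hc.ne', one_smul]
  have hw := dotProduct_add_smul_self_add_dotProduct_sub_smul_self r w₁ w₂
  have hu := dotProduct_add_smul_self_add_dotProduct_sub_smul_self r u₁ u₂
  rw [hsum, sub_self, zero_dotProduct, add_zero] at hu
  have hle : (w₂ - r • w₁) ⬝ᵥ (w₂ - r • w₁) ≤ 0 :=
    calc (w₂ - r • w₁) ⬝ᵥ (w₂ - r • w₁) = (1 + r ^ 2) * (w₁ ⬝ᵥ w₁ + w₂ ⬝ᵥ w₂) - s ⬝ᵥ s := by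
          rw [← hw]; ring
      _ ≤ (1 + r ^ 2) * (u₁ ⬝ᵥ u₁ + u₂ ⬝ᵥ u₂) - s ⬝ᵥ s := by
          gcongr (1 + r ^ 2) * ?_ - _; exact hmin u₁ u₂ hsum
      _ = 0 := by rw [← hu, sub_self]
  have hzero : (w₂ - r • w₁) ⬝ᵥ (w₂ - r • w₁) = 0 :=
    hle.antisymm (Finset.sum_nonneg fun i _ => mul_self_nonneg _)
  exact sub_eq_zero.mp (dotProduct_self_eq_zero.mp hzero)

end DotProduct

theorem weight_alignment_general {d m : ℕ} (r : ℝ)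
    (v : Fin m → Fin d → ℝ) (y : Fin m → ℝ)
    (w₁ w₂ : Fin d → ℝ)
    (hfeas : ∀ j, y j * ((w₁ + r • w₂) ⬝ᵥ v j) ≥ 1)
    (hopt : ∀ u₁ u₂ : Fin d → ℝ,
      (∀ j, y j * ((u₁ + r • u₂) ⬝ᵥ v j) ≥ 1) →
      w₁ ⬝ᵥ w₁ + w₂ ⬝ᵥ w₂ ≤ u₁ ⬝ᵥ u₁ + u₂ ⬝ᵥ u₂) :
    w₂ = r • w₁ :=
  eq_smul_of_forall_add_smul_eq fun u₁ u₂ hu => hopt u₁ u₂ fun j => hu ▸ hfeas j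

/-- Weight alignment: an optimal solution of the GNN max-margin problem over
r-regular graphs satisfies `w₂ = r • w₁`. -/
theorem weight_alignment {d m : ℕ} (r : ℝ) (hr : 0 < r)
    (v : Fin m → Fin d → ℝ) (y : Fin m → ℝ)
    (hy : ∀ j, y j = 1 ∨ y j = -1)
    (w₁ w₂ : Fin d → ℝ)
    (hfeas : ∀ j, y j * ((w₁ + r • w₂) ⬝ᵥ v j) ≥ 1)
    (hopt : ∀ u₁ u₂ : Fin d → ℝ,
      (∀ j, y j * ((u₁ + r • u₂) ⬝ᵥ v j) ≥ 1) →
      w₁ ⬝ᵥ w₁ + w₂ ⬝ᵥ w₂ ≤ u₁ ⬝ᵥ u₁ + u₂ ⬝ᵥ u₂) :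
    w₂ = r • w₁ :=
  weight_alignment_general r v y w₁ w₂ hfeas hopt
end

section
/- Let r > 0 and let (vⱼ, yⱼ) be finitely many pairs with vⱼ ∈ ℝᵈ, yⱼ ∈ {-1,1}, linearly separable (there exists u with yⱼ(u·vⱼ) ≥ 1 for all j). Then the problem min ‖w₁‖² + ‖w₂‖² subject to yⱼ((w₁ + r·w₂)·vⱼ) ≥ 1 has a unique optimal solution, and it satisfies w₁ = u*/(1+r²) and w₂ = r·u*/(1+r²), where u* is the unique optimizer of min ‖u‖² subject to yⱼ(u·vⱼ) ≥ 1. -/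
/-!
Every `(w₁, w₂)` with `w₁ + r • w₂ = u` has `‖w₁‖² + ‖w₂‖² ≥ ‖u‖² / (1 + r²)`, with equality for
`w₁ = u / (1 + r²)`, `w₂ = r u / (1 + r²)` (Cauchy–Schwarz for `(1, r)` and `(w₁, w₂)`). The constraints
only see `u`, so minimising over `(w₁, w₂)` amounts to minimising `‖u‖²` over the SVM constraints and
splitting the SVM optimum `u*` in this way.
-/

open Matrix

section MinNormSplit

variable {ι R : Type*} [Field R] [LinearOrder R] [IsStrictOrderedRing R]

theorem add_smul_dotProduct_self_le [Fintype ι] (r : R) (a b : ι → R) :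
    (a + r • b) ⬝ᵥ (a + r • b) ≤ (1 + r ^ 2) * (a ⬝ᵥ a + b ⬝ᵥ b) := by
  have hsq : 0 ≤ (r • a - b) ⬝ᵥ (r • a - b) :=
    Finset.sum_nonneg fun i _ => mul_self_nonneg _
  have hexpand : (1 + r ^ 2) * (a ⬝ᵥ a + b ⬝ᵥ b) - (a + r • b) ⬝ᵥ (a + r • b)
      = (r • a - b) ⬝ᵥ (r • a - b) := by
    simp only [add_dotProduct, dotProduct_add, sub_dotProduct, dotProduct_sub, smul_dotProduct,
      dotProduct_smul, smul_eq_mul, dotProduct_comm b a]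
    ring
  linarith

def minNormSplit (r : R) (u : ι → R) : (ι → R) × (ι → R) :=
  ((1 + r ^ 2)⁻¹ • u, (r / (1 + r ^ 2)) • u)

theorem minNormSplit_fst_add_smul_snd (r : R) (u : ι → R) :
    (minNormSplit r u).1 + r • (minNormSplit r u).2 = u := by
  rw [minNormSplit, smul_smul, ← add_smul]
  convert one_smul R u
  field_simp

theorem minNormSplit_dotProduct_self [Fintype ι] (r : R) (u : ι → R) :
    (minNormSplit r u).1 ⬝ᵥ (minNormSplit r u).1 + (minNormSplit r u).2 ⬝ᵥ (minNormSplit r u).2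
      = (u ⬝ᵥ u) / (1 + r ^ 2) := by
  simp only [minNormSplit, smul_dotProduct, dotProduct_smul, smul_eq_mul]
  field_simp

theorem minNormSplit_dotProduct_self_le [Fintype ι] (r : R) {u a b : ι → R}
    (hu : u ⬝ᵥ u ≤ (a + r • b) ⬝ᵥ (a + r • b)) :
    (minNormSplit r u).1 ⬝ᵥ (minNormSplit r u).1 + (minNormSplit r u).2 ⬝ᵥ (minNormSplit r u).2
      ≤ a ⬝ᵥ a + b ⬝ᵥ b := by
  have hpos : (0 : R) < 1 + r ^ 2 := by positivity
  rw [minNormSplit_dotProduct_self, div_le_iff₀ hpos, mul_comm]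
  exact hu.trans (add_smul_dotProduct_self_le r a b)

end MinNormSplit

theorem unique_solution_formula_general {d m : ℕ} (r : ℝ)
    (v : Fin m → Fin d → ℝ) (y : Fin m → ℝ)
    (ustar : Fin d → ℝ)
    (hufeas : ∀ j, y j * (ustar ⬝ᵥ v j) ≥ 1)
    (huopt : ∀ u : Fin d → ℝ, (∀ j, y j * (u ⬝ᵥ v j) ≥ 1) →
      ustar ⬝ᵥ ustar ≤ u ⬝ᵥ u) :
    ∃! p : (Fin d → ℝ) × (Fin d → ℝ),
      ((∀ j, y j * ((p.1 + r • p.2) ⬝ᵥ v j) ≥ 1) ∧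
        ∀ q : (Fin d → ℝ) × (Fin d → ℝ),
          (∀ j, y j * ((q.1 + r • q.2) ⬝ᵥ v j) ≥ 1) →
          p.1 ⬝ᵥ p.1 + p.2 ⬝ᵥ p.2 ≤ q.1 ⬝ᵥ q.1 + q.2 ⬝ᵥ q.2) ∧
      p.1 = (1 + r ^ 2)⁻¹ • ustar ∧ p.2 = (r / (1 + r ^ 2)) • ustar := by
  refine ⟨minNormSplit r ustar, ⟨⟨?feasible, ?optimal⟩, rfl, rfl⟩, ?unique⟩
  case feasible => simpa only [minNormSplit_fst_add_smul_snd] using hufeas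
  case optimal => exact fun q hq => minNormSplit_dotProduct_self_le r (huopt _ hq)
  case unique => exact fun q ⟨_, h₁, h₂⟩ => Prod.ext h₁ h₂

/-- The GNN max-margin problem over r-regular graphs has a unique optimal
solution given explicitly in terms of the SVM max-margin solution `ustar`. -/
theorem unique_solution_formula {d m : ℕ} (r : ℝ) (hr : 0 < r)
    (v : Fin m → Fin d → ℝ) (y : Fin m → ℝ)
    (hy : ∀ j, y j = 1 ∨ y j = -1)
    (hsep : ∃ u : Fin d → ℝ, ∀ j, y j * (u ⬝ᵥ v j) ≥ 1)
    (ustar : Fin d → ℝ)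
    (hufeas : ∀ j, y j * (ustar ⬝ᵥ v j) ≥ 1)
    (huopt : ∀ u : Fin d → ℝ, (∀ j, y j * (u ⬝ᵥ v j) ≥ 1) →
      ustar ⬝ᵥ ustar ≤ u ⬝ᵥ u)
    (huunique : ∀ u : Fin d → ℝ, (∀ j, y j * (u ⬝ᵥ v j) ≥ 1) →
      u ⬝ᵥ u = ustar ⬝ᵥ ustar → u = ustar) :
    ∃! p : (Fin d → ℝ) × (Fin d → ℝ),
      ((∀ j, y j * ((p.1 + r • p.2) ⬝ᵥ v j) ≥ 1) ∧
        ∀ q : (Fin d → ℝ) × (Fin d → ℝ),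
          (∀ j, y j * ((q.1 + r • q.2) ⬝ᵥ v j) ≥ 1) →
          p.1 ⬝ᵥ p.1 + p.2 ⬝ᵥ p.2 ≤ q.1 ⬝ᵥ q.1 + q.2 ⬝ᵥ q.2) ∧
      p.1 = (1 + r ^ 2)⁻¹ • ustar ∧ p.2 = (r / (1 + r ^ 2)) • ustar :=
  unique_solution_formula_general r v y ustar hufeas huopt
end

section
/- There exist two graphs G₁, G₂ on n ≥ 2 nodes with identical node features x₁,…,xₙ ∈ ℝᵈ, a weight vector w₁ ∈ ℝᵈ with w₂ = r·w₁ (r > 0), and a graph-less teacher f*(X) = sign(w₁·Σᵢ xᵢ), such that f* gives the same label to both graphs but the GNN f(X,A) = w₁·Σᵢxᵢ + w₂·Σᵢ deg(i)xᵢ assigns them outputs of opposite sign. -/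
/-!
Node degrees enter the GNN score as per-node weights: the score equals
`∑ i, (1 + r * deg i) * (w₁ ⬝ᵥ x i)`. On the edgeless graph every weight is `1`, so the GNN
reproduces the teacher's score `w₁ ⬝ᵥ ∑ i, x i`. On a graph with a single edge `0 - 1` the
two endpoints get weight `1 + r` while the isolated node `2` keeps weight `1`; with per-node
scores `1, 1, -3` and `r = 1` the teacher's score is `-1` but the GNN score is `2 + 2 - 3 = 1`.
-/

open Matrix Finset SimpleGraph

namespace SimpleGraph

variable {V : Type*} {s t v : V}

theorem degree_edge_left (h : s ≠ t) [Fintype ((edge s t).neighborSet s)] :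
    (edge s t).degree s = 1 :=
  degree_eq_one_iff_existsUnique_adj.mpr ⟨t, by simp [edge_adj, h], fun w hw => by grind⟩

theorem degree_edge_right (h : s ≠ t) [Fintype ((edge s t).neighborSet t)] :
    (edge s t).degree t = 1 :=
  degree_eq_one_iff_existsUnique_adj.mpr ⟨s, by simp [edge_adj, h.symm], fun w hw => by grind⟩

theorem degree_edge_of_ne_of_ne (hs : v ≠ s) (ht : v ≠ t) [Fintype ((edge s t).neighborSet v)] :
    (edge s t).degree v = 0 :=
  (degree_eq_zero _ _).mpr fun w hw => by grind

end SimpleGraph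

theorem gnn_score_eq_sum {V : Type*} [Fintype V] {d : ℕ} (x : V → Fin d → ℝ) (w : Fin d → ℝ)
    (r : ℝ) (deg : V → ℕ) :
    w ⬝ᵥ ∑ i, x i + (r • w) ⬝ᵥ ∑ i, (deg i : ℝ) • x i =
      ∑ i, (1 + r * deg i) * (w ⬝ᵥ x i) := by
  simp only [dotProduct_sum, smul_dotProduct, dotProduct_smul, smul_eq_mul, ← sum_add_distrib]
  exact sum_congr rfl fun i _ => by ring

open scoped Classical in
/-- Failure of extrapolation: two graphs with identical node features, hence the
same graph-less teacher label, on which the aligned GNN outputs have opposite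
(nonzero) signs. -/
theorem extrapolation_failure_exists :
    ∃ (n d : ℕ) (x : Fin n → Fin d → ℝ) (w₁ : Fin d → ℝ) (r : ℝ)
      (G₁ G₂ : SimpleGraph (Fin n)),
      2 ≤ n ∧ 0 < r ∧
      Real.sign (w₁ ⬝ᵥ ∑ i, x i) ≠ 0 ∧
      Real.sign (w₁ ⬝ᵥ (∑ i, x i) + (r • w₁) ⬝ᵥ ∑ i, (G₁.degree i : ℝ) • x i) =
        - Real.sign (w₁ ⬝ᵥ (∑ i, x i) + (r • w₁) ⬝ᵥ ∑ i, (G₂.degree i : ℝ) • x i) ∧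
      Real.sign (w₁ ⬝ᵥ (∑ i, x i) + (r • w₁) ⬝ᵥ ∑ i, (G₁.degree i : ℝ) • x i) ≠ 0 := by
  refine ⟨3, 1, fun i _ => ![1, 1, -3] i, fun _ => 1, 1, edge 0 1, ⊥, by norm_num, one_pos, ?_⟩
  rw [gnn_score_eq_sum, gnn_score_eq_sum]
  simp only [Fin.sum_univ_three, IsIsolated.bot, IsIsolated.degree_eq_zero]
  simp (disch := decide) only [degree_edge_left, degree_edge_right, degree_edge_of_ne_of_ne]
  norm_num [dotProduct, Matrix.cons_val_two, Real.sign_of_neg]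
end

section
/- Let u* be the max-margin solution of min ‖u‖² s.t. yⱼ(u·vⱼ) ≥ 1 (linearly separable data, some constraint active). For r > 0 define w₁ = u*/(1+r²), w₂ = r·u*/(1+r²). Then (w₁, w₂) satisfies the KKT conditions of min ‖w₁‖² + ‖w₂‖² s.t. yⱼ((w₁ + r·w₂)·vⱼ) ≥ 1: there exist λⱼ ≥ 0 with w₁ = Σⱼ λⱼ yⱼ vⱼ, w₂ = r·Σⱼ λⱼ yⱼ vⱼ, and λⱼ = 0 whenever yⱼ((w₁+r·w₂)·vⱼ) > 1. -/
/-!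
With `aⱼ = yⱼ • vⱼ`, `u*` is a minimum-norm point of the polyhedron `{w | ∀ j, 1 ≤ ⟪aⱼ, w⟫}`.
By first-order optimality, `0 ≤ ⟪u*, z⟫` whenever `0 ≤ ⟪aⱼ, z⟫` for every active `j`, so by
Farkas' lemma `u*` lies in the cone spanned by the active `aⱼ`; this needs the cone to be closed,
which holds for every finitely generated cone by conic Carathéodory. This gives multipliers
`μⱼ ≥ 0` with `u* = ∑ μⱼ aⱼ`, vanishing on inactive constraints. Since
`w₁ + r • w₂ = u*` and `(w₁, w₂) = (1 + r²)⁻¹ • (u*, r • u*)`, the multipliers `μⱼ / (1 + r²)`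
work for the aligned pair.
-/

open Matrix BigOperators Finset
open scoped RealInnerProductSpace

namespace PointedCone

variable {ι E : Type*}

section Algebra

variable [AddCommGroup E] [Module ℝ E] {a : ι → E} {s : Finset ι} {x : E}

lemma mem_hull_image_finset :
    x ∈ hull ℝ (a '' s) ↔ ∃ μ : ι → ℝ, (∀ i ∈ s, 0 ≤ μ i) ∧ ∑ i ∈ s, μ i • a i = x := by
  classical
  rw [Fintype.mem_span_image_iff_exists_fun]
  constructor
  · rintro ⟨c, rfl⟩
    refine ⟨fun i => if h : i ∈ s then c ⟨i, h⟩ else 0, fun i hi => by simp [hi, (c _).2], ?_⟩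
    rw [← sum_coe_sort s]
    exact sum_congr rfl fun i _ => by simp [i.2]
  · rintro ⟨μ, hμ, rfl⟩
    exact ⟨fun i => ⟨μ i, hμ i i.2⟩, sum_coe_sort s (fun i => μ i • a i)⟩

lemma exists_sum_smul_eq_zero_pos_of_not_linearIndepOn (hs : ¬ LinearIndepOn ℝ a s) :
    ∃ c : ι → ℝ, ∑ i ∈ s, c i • a i = 0 ∧ ∃ i ∈ s, 0 < c i := by
  obtain ⟨c, hc, i, hi, hci⟩ := not_linearIndepOn_finset_iff.1 hs
  rcases hci.lt_or_gt with hneg | hpos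
  · exact ⟨-c, by simp [neg_smul, sum_neg_distrib, hc], i, hi, by simpa using hneg⟩
  · exact ⟨c, hc, i, hi, hpos⟩

/-- The reduction step of conic Carathéodory: move along a linear relation among the generators
until a coefficient vanishes. -/
lemma exists_mem_hull_erase [DecidableEq ι] (hs : ¬ LinearIndepOn ℝ a s)
    (hx : x ∈ hull ℝ (a '' s)) : ∃ i ∈ s, x ∈ hull ℝ (a '' (s.erase i)) := by
  obtain ⟨μ, hμ, rfl⟩ := mem_hull_image_finset.1 hx
  obtain ⟨c, hc, hpos⟩ := exists_sum_smul_eq_zero_pos_of_not_linearIndepOn hs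
  obtain ⟨i₀, hi₀, hmin⟩ := exists_min_image (s.filter (0 < c ·)) (fun i => μ i / c i)
    (by simpa [Finset.Nonempty] using hpos)
  rw [mem_filter] at hi₀
  set α := μ i₀ / c i₀
  have hα : 0 ≤ α := div_nonneg (hμ i₀ hi₀.1) hi₀.2.le
  refine ⟨i₀, hi₀.1, mem_hull_image_finset.2 ⟨fun i => μ i - α * c i, fun i hi => ?_, ?_⟩⟩
  · have hi := mem_of_mem_erase hi
    rcases le_or_gt (c i) 0 with hci | hci
    · nlinarith [hμ i hi]
    · have := hmin i (mem_filter.2 ⟨hi, hci⟩)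
      rw [le_div_iff₀ hci] at this
      linarith
  · have hα₀ : μ i₀ - α * c i₀ = 0 := by simp only [α, div_mul_cancel₀ _ hi₀.2.ne', sub_self]
    rw [sum_erase _ (by simp only [hα₀, zero_smul])]
    simp only [sub_smul, sum_sub_distrib, mul_smul, ← smul_sum, hc, smul_zero, sub_zero]

/-- Conic Carathéodory theorem. -/
lemma exists_linearIndepOn_mem_hull (hx : x ∈ hull ℝ (a '' s)) :
    ∃ t ⊆ s, LinearIndepOn ℝ a t ∧ x ∈ hull ℝ (a '' t) := by
  classical
  induction s using Finset.strongInduction with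
  | H s ih =>
    by_cases hs : LinearIndepOn ℝ a s
    · exact ⟨s, subset_rfl, hs, hx⟩
    obtain ⟨i, hi, hxi⟩ := exists_mem_hull_erase hs hx
    obtain ⟨t, hts, ht, hxt⟩ := ih _ (erase_ssubset hi) hxi
    exact ⟨t, hts.trans (erase_subset _ _), ht, hxt⟩

end Algebra

section Topology

variable [AddCommGroup E] [Module ℝ E] [TopologicalSpace E] [IsTopologicalAddGroup E]
  [ContinuousSMul ℝ E] [T2Space E] {a : ι → E}

lemma isClosed_hull_image_of_linearIndepOn {t : Finset ι} (ht : LinearIndepOn ℝ a t) :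
    IsClosed (hull ℝ (a '' t) : Set E) := by
  have hemb := LinearMap.isClosedEmbedding_of_injective <| LinearMap.ker_eq_bot.2 <|
    linearIndependent_iff_injective_fintypeLinearCombination.1 ht
  have himage : (hull ℝ (a '' t) : Set E) =
      Fintype.linearCombination ℝ (fun i : (t : Set ι) => a i) '' Set.Ici 0 := by
    ext x
    simp only [SetLike.mem_coe, Fintype.mem_span_image_iff_exists_fun, Set.mem_image,
      Set.mem_Ici, Fintype.linearCombination_apply]
    constructor
    · rintro ⟨c, rfl⟩
      exact ⟨fun i => c i, fun i => (c i).2, rfl⟩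
    · rintro ⟨ν, hν, rfl⟩
      exact ⟨fun i => ⟨ν i, hν i⟩, rfl⟩
  rw [himage]
  exact hemb.isClosedMap _ isClosed_Ici

lemma isClosed_hull_image (a : ι → E) (s : Finset ι) : IsClosed (hull ℝ (a '' s) : Set E) := by
  classical
  have hunion : (hull ℝ (a '' s) : Set E) =
      ⋃ t ∈ (s.powerset.filter (LinearIndepOn ℝ a ·) : Finset (Finset ι)), hull ℝ (a '' t) := by
    ext x
    simp only [Set.mem_iUnion, mem_filter, mem_powerset, SetLike.mem_coe, exists_prop]
    refine ⟨fun hx => ?_, fun ⟨t, ⟨hts, _⟩, hxt⟩ => ?_⟩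
    · obtain ⟨t, hts, ht, hxt⟩ := exists_linearIndepOn_mem_hull hx
      exact ⟨t, ⟨hts, ht⟩, hxt⟩
    · exact Submodule.span_mono (Set.image_mono (coe_subset.2 hts)) hxt
  rw [hunion]
  exact (s.powerset.filter _).finite_toSet.isClosed_biUnion fun t ht =>
    isClosed_hull_image_of_linearIndepOn (mem_filter.1 ht).2

end Topology

end PointedCone

section MinNorm

open Filter Topology PointedCone

variable {ι F : Type*} [NormedAddCommGroup F] [InnerProductSpace ℝ F] {a : ι → F} {u : F}

lemma inner_nonneg_of_minNorm [Finite ι] (hfeas : ∀ j, 1 ≤ ⟪a j, u⟫)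
    (hopt : ∀ w : F, (∀ j, 1 ≤ ⟪a j, w⟫) → ⟪u, u⟫ ≤ ⟪w, w⟫) {z : F}
    (hz : ∀ j, ⟪a j, u⟫ = 1 → 0 ≤ ⟪a j, z⟫) : 0 ≤ ⟪u, z⟫ := by
  -- otherwise `u + ε • z` is feasible and shorter than `u` for small `ε > 0`
  by_contra! hneg
  have hfeas_near : ∀ j, ∀ᶠ ε in 𝓝[>] (0 : ℝ), 1 ≤ ⟪a j, u + ε • z⟫ := by
    intro j
    simp only [inner_add_right, real_inner_smul_right]
    rcases (hfeas j).eq_or_lt with hj | hj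
    · filter_upwards [self_mem_nhdsWithin] with ε (hε : 0 < ε)
      nlinarith [hz j hj.symm]
    · have hlim : Tendsto (fun ε : ℝ => ⟪a j, u⟫ + ε * ⟪a j, z⟫) (𝓝 0) (𝓝 ⟪a j, u⟫) :=
        (by fun_prop : Continuous fun ε : ℝ => ⟪a j, u⟫ + ε * ⟪a j, z⟫).tendsto' 0 _ (by simp)
      exact nhdsWithin_le_nhds ((hlim.eventually (lt_mem_nhds hj)).mono fun _ => le_of_lt)
  have hdecr_near : ∀ᶠ ε in 𝓝[>] (0 : ℝ), ⟪u + ε • z, u + ε • z⟫ < ⟪u, u⟫ := by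
    have hlim : Tendsto (fun ε : ℝ => 2 * ⟪u, z⟫ + ε * ⟪z, z⟫) (𝓝 0) (𝓝 (2 * ⟪u, z⟫)) :=
      (by fun_prop : Continuous fun ε : ℝ => 2 * ⟪u, z⟫ + ε * ⟪z, z⟫).tendsto' 0 _ (by simp)
    filter_upwards [nhdsWithin_le_nhds (hlim.eventually (gt_mem_nhds (by linarith))),
      self_mem_nhdsWithin] with ε hslope (hε : 0 < ε)
    have hexpand : ⟪u + ε • z, u + ε • z⟫ = ⟪u, u⟫ + ε * (2 * ⟪u, z⟫ + ε * ⟪z, z⟫) := by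
      rw [real_inner_add_add_self, real_inner_smul_right, real_inner_smul_left,
        real_inner_smul_right]
      ring
    nlinarith
  obtain ⟨ε, hεfeas, hεdecr⟩ := ((eventually_all.2 hfeas_near).and hdecr_near).exists
  exact (hopt _ hεfeas).not_gt hεdecr

lemma exists_kkt_multipliers [Fintype ι] [CompleteSpace F] (hfeas : ∀ j, 1 ≤ ⟪a j, u⟫)
    (hopt : ∀ w : F, (∀ j, 1 ≤ ⟪a j, w⟫) → ⟪u, u⟫ ≤ ⟪w, w⟫) :
    ∃ μ : ι → ℝ, (∀ j, 0 ≤ μ j) ∧ u = ∑ j, μ j • a j ∧ ∀ j, 1 < ⟪a j, u⟫ → μ j = 0 := by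
  classical
  set S := univ.filter fun j => ⟪a j, u⟫ = 1
  have hu : u ∈ hull ℝ (a '' S) := by
    by_contra hu
    let C : ProperCone ℝ F := ⟨hull ℝ (a '' S), isClosed_hull_image a S⟩
    obtain ⟨z, hz, huz⟩ := C.hyperplane_separation' hu
    exact huz.not_ge <| inner_nonneg_of_minNorm hfeas hopt fun j hj =>
      hz _ (subset_hull (Set.mem_image_of_mem a (show j ∈ (S : Set ι) by simpa [S] using hj)))
  obtain ⟨μ, hμ, hμu⟩ := mem_hull_image_finset.1 hu
  refine ⟨fun j => if j ∈ S then μ j else 0, fun j => ?_, ?_, fun j hj => ?_⟩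
  · by_cases hj : j ∈ S <;> simp [hj, hμ j]
  · simpa [ite_smul, ← sum_filter] using hμu.symm
  · simp [S, hj.ne']

end MinNorm

theorem kkt_of_aligned_pair_general {d m : ℕ} (r : ℝ)
    (v : Fin m → Fin d → ℝ) (y : Fin m → ℝ)
    (ustar : Fin d → ℝ)
    (hufeas : ∀ j, y j * (ustar ⬝ᵥ v j) ≥ 1)
    (huopt : ∀ u : Fin d → ℝ, (∀ j, y j * (u ⬝ᵥ v j) ≥ 1) →
      ustar ⬝ᵥ ustar ≤ u ⬝ᵥ u)
    (w₁ w₂ : Fin d → ℝ)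
    (hw₁ : w₁ = (1 + r ^ 2)⁻¹ • ustar)
    (hw₂ : w₂ = (r / (1 + r ^ 2)) • ustar) :
    ∃ lam : Fin m → ℝ, (∀ j, 0 ≤ lam j) ∧
      w₁ = ∑ j, (lam j * y j) • v j ∧
      w₂ = r • ∑ j, (lam j * y j) • v j ∧
      ∀ j, 1 < y j * ((w₁ + r • w₂) ⬝ᵥ v j) → lam j = 0 := by
  have hinner (j) (w : EuclideanSpace ℝ (Fin d)) :
      ⟪WithLp.toLp 2 (y j • v j), w⟫ = y j * (w.ofLp ⬝ᵥ v j) := by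
    rw [EuclideanSpace.inner_eq_star_dotProduct, star_trivial, dotProduct_smul, smul_eq_mul]
  obtain ⟨μ, hμ, hu, hslack⟩ := exists_kkt_multipliers
    (a := fun j => WithLp.toLp 2 (y j • v j)) (u := WithLp.toLp 2 ustar)
    (fun j => by simpa only [hinner] using hufeas j)
    (fun w hw => by
      simpa only [EuclideanSpace.inner_eq_star_dotProduct, star_trivial]
        using huopt w.ofLp fun j => by simpa only [hinner] using hw j)
  have hustar : ustar = ∑ j, (μ j * y j) • v j := by
    simpa [mul_smul] using congrArg WithLp.ofLp hu
  have hw₂₁ : w₂ = r • w₁ := by rw [hw₂, hw₁, smul_smul, div_eq_mul_inv]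
  have hsum : w₁ + r • w₂ = ustar := by
    rw [hw₂₁, hw₁]
    match_scalars
    field_simp
  have hw₁' : w₁ = ∑ j, ((1 + r ^ 2)⁻¹ * μ j * y j) • v j := by
    simp_rw [hw₁, hustar, smul_sum, smul_smul, mul_assoc]
  refine ⟨fun j => (1 + r ^ 2)⁻¹ * μ j, fun j => by have := hμ j; positivity, hw₁',
    by rw [hw₂₁, hw₁'], fun j hj => ?_⟩
  rw [hsum] at hj
  simp [hslack j (by simpa only [hinner] using hj)]

/-- The aligned pair built from the max-margin SVM solution satisfies the KKT
conditions of the GNN max-margin problem. -/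
theorem kkt_of_aligned_pair {d m : ℕ} (r : ℝ) (hr : 0 < r)
    (v : Fin m → Fin d → ℝ) (y : Fin m → ℝ)
    (hy : ∀ j, y j = 1 ∨ y j = -1)
    (ustar : Fin d → ℝ)
    (hufeas : ∀ j, y j * (ustar ⬝ᵥ v j) ≥ 1)
    (huopt : ∀ u : Fin d → ℝ, (∀ j, y j * (u ⬝ᵥ v j) ≥ 1) →
      ustar ⬝ᵥ ustar ≤ u ⬝ᵥ u)
    (hactive : ∃ j, y j * (ustar ⬝ᵥ v j) = 1)
    (w₁ w₂ : Fin d → ℝ)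
    (hw₁ : w₁ = (1 + r ^ 2)⁻¹ • ustar)
    (hw₂ : w₂ = (r / (1 + r ^ 2)) • ustar) :
    ∃ lam : Fin m → ℝ, (∀ j, 0 ≤ lam j) ∧
      w₁ = ∑ j, (lam j * y j) • v j ∧
      w₂ = r • ∑ j, (lam j * y j) • v j ∧
      ∀ j, 1 < y j * ((w₁ + r • w₂) ⬝ᵥ v j) → lam j = 0 :=
  kkt_of_aligned_pair_general r v y ustar hufeas huopt w₁ w₂ hw₁ hw₂
end

section
/- Suppose (w₁, w₂) solves min ‖w₁‖² + ‖w₂‖² s.t. yⱼ(w₁·aⱼ + w₂·bⱼ) ≥ 1 where for every j, bⱼ = r·aⱼ (r > 0 fixed). Then the optimal value equals (min ‖u‖² s.t. yⱼ(u·aⱼ) ≥ 1)/(1+r²), i.e., the margin of the effective classifier grows by a factor √(1+r²) compared to the plain SVM on the sums aⱼ. -/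
open Matrix BigOperators Finset

/-- When `bⱼ = r • aⱼ`, the optimal value of the GNN max-margin problem equals
the plain SVM optimal value divided by `1 + r²`. -/
theorem optimal_value_rescaled {d m : ℕ} (r : ℝ) (hr : 0 < r)
    (a b : Fin m → Fin d → ℝ) (y : Fin m → ℝ)
    (hy : ∀ j, y j = 1 ∨ y j = -1)
    (hb : ∀ j, b j = r • a j)
    (w₁ w₂ : Fin d → ℝ)
    (hfeas : ∀ j, y j * (w₁ ⬝ᵥ a j + w₂ ⬝ᵥ b j) ≥ 1)
    (hopt : ∀ u₁ u₂ : Fin d → ℝ,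
      (∀ j, y j * (u₁ ⬝ᵥ a j + u₂ ⬝ᵥ b j) ≥ 1) →
      w₁ ⬝ᵥ w₁ + w₂ ⬝ᵥ w₂ ≤ u₁ ⬝ᵥ u₁ + u₂ ⬝ᵥ u₂)
    (ustar : Fin d → ℝ)
    (hufeas : ∀ j, y j * (ustar ⬝ᵥ a j) ≥ 1)
    (huopt : ∀ u : Fin d → ℝ, (∀ j, y j * (u ⬝ᵥ a j) ≥ 1) →
      ustar ⬝ᵥ ustar ≤ u ⬝ᵥ u) :
    w₁ ⬝ᵥ w₁ + w₂ ⬝ᵥ w₂ = (ustar ⬝ᵥ ustar) / (1 + r ^ 2) := by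
  set c : ℝ := 1 + r ^ 2 with hc
  have hcpos : 0 < c := by positivity
  -- upper bound: candidate (ustar/c, r•ustar/c)
  have h1 : w₁ ⬝ᵥ w₁ + w₂ ⬝ᵥ w₂ ≤ (ustar ⬝ᵥ ustar) / c := by
    have hfeas' : ∀ j, y j * ((c⁻¹ • ustar) ⬝ᵥ a j + ((r / c) • ustar) ⬝ᵥ b j) ≥ 1 := by
      intro j
      have := hufeas j
      rw [hb j]
      simp only [smul_dotProduct, dotProduct_smul, smul_eq_mul]
      have hx : c⁻¹ * (ustar ⬝ᵥ a j) + r * (r / c * (ustar ⬝ᵥ a j))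
          = ustar ⬝ᵥ a j := by
        field_simp
        ring
      rw [hx]
      exact hufeas j
    have h := hopt (c⁻¹ • ustar) ((r / c) • ustar) hfeas'
    have heq : (c⁻¹ • ustar) ⬝ᵥ (c⁻¹ • ustar) + ((r / c) • ustar) ⬝ᵥ ((r / c) • ustar)
        = (ustar ⬝ᵥ ustar) / c := by
      simp only [smul_dotProduct, dotProduct_smul, smul_eq_mul]
      field_simp
      ring
    linarith [h, heq ▸ h]
  -- lower bound: u = w₁ + r • w₂ feasible for plain SVM
  have h2 : (ustar ⬝ᵥ ustar) / c ≤ w₁ ⬝ᵥ w₁ + w₂ ⬝ᵥ w₂ := by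
    have hfeas'' : ∀ j, y j * ((w₁ + r • w₂) ⬝ᵥ a j) ≥ 1 := by
      intro j
      have := hfeas j
      rw [hb j] at this
      simpa [add_dotProduct, smul_dotProduct, dotProduct_smul, smul_eq_mul,
        mul_comm] using this
    have h := huopt (w₁ + r • w₂) hfeas''
    have hcs : (w₁ + r • w₂) ⬝ᵥ (w₁ + r • w₂) ≤ c * (w₁ ⬝ᵥ w₁ + w₂ ⬝ᵥ w₂) := by
      have hnn : 0 ≤ (r • w₁ - w₂) ⬝ᵥ (r • w₁ - w₂) := Finset.sum_nonneg fun i _ => mul_self_nonneg _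
      have hexp : (w₁ + r • w₂) ⬝ᵥ (w₁ + r • w₂) + (r • w₁ - w₂) ⬝ᵥ (r • w₁ - w₂)
          = c * (w₁ ⬝ᵥ w₁ + w₂ ⬝ᵥ w₂) := by
        simp only [add_dotProduct, dotProduct_add, sub_dotProduct, dotProduct_sub,
          smul_dotProduct, dotProduct_smul, smul_eq_mul, hc]
        have hsymm : w₁ ⬝ᵥ w₂ = w₂ ⬝ᵥ w₁ := dotProduct_comm _ _
        nlinarith [hsymm]
      linarith
    have := le_trans h hcs
    rw [div_le_iff₀ hcpos]
    linarith
  linarith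
end
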